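/- Let α_n(a,b) = Σ 2^{dd(π)} over permutations of [n] with no double ascents whose descent word starts with an ascent and ends with a descent. Then for n ≥ 3, α_n(a,b) equals the nearest integer to (1 − 2/e) · n!. -/

import Mathlib

open Finset
open scoped Classical

/-- π has an ascent at position i (0-indexed): π_i < π_{i+1}. -/
def Asc {n : ℕ} (π : Equiv.Perm (Fin n)) (i : ℕ) : Prop :=
  ∃ h : i + 1 < n, π ⟨i, Nat.lt_of_succ_lt h⟩ < π ⟨i + 1, h⟩

/-- π has a descent at position i (0-indexed): π_i > π_{i+1}. -/
def Desc {n : ℕ} (π : Equiv.Perm (Fin n)) (i : ℕ) : Prop :=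
  ∃ h : i + 1 < n, π ⟨i + 1, h⟩ < π ⟨i, Nat.lt_of_succ_lt h⟩

/-- The number of double descents of π: positions i with π_i > π_{i+1} > π_{i+2}. -/
noncomputable def dd {n : ℕ} (π : Equiv.Perm (Fin n)) : ℕ :=
  ((Finset.range n).filter (fun i => Desc π i ∧ Desc π (i + 1))).card

/-- π has no double ascents: no i with π_i < π_{i+1} < π_{i+2}. -/
def NoDoubleAsc {n : ℕ} (π : Equiv.Perm (Fin n)) : Prop :=
  ∀ i : ℕ, ¬ (Asc π i ∧ Asc π (i + 1))

/-- α_n(a,b) = Σ 2^{dd(π)} over permutations of [n] with no double ascents whose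
descent word starts with an ascent and ends with a descent. -/
noncomputable def alphaAB (n : ℕ) : ℕ :=
  ∑ π ∈ Finset.univ.filter
      (fun π : Equiv.Perm (Fin n) => NoDoubleAsc π ∧ Asc π 0 ∧ Desc π (n - 2)),
    2 ^ dd π

/-!
Sort the permutations by their first value `k`. Each permutation arises exactly once by
prepending `k` to a standardized shorter word `σ`; this keeps the double descents of `σ` and
adds one exactly when `k > σ₀ > σ₁`. Let `F_m k`, `G_m k` be the `2 ^ dd`-weighted counts of the
words of length `m + 2` without double ascents that end with a descent and start with a
descent, resp. an ascent, at the value `k`. Then `F_{m+1} k = ∑_{j < k} (2 F_m j + G_m j)` and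
`G_{m+1} k = ∑_{j ≥ k} F_m j`, solved by `F_m k = k T_m (k - 1)` and `F_m k + G_m k = T_{m+1} k`,
where `T_m j = ∑_i (j choose i) D_{m-i}` obeys Pascal's rule. Summing over `k` gives
`α_n = n! - 2 D_n`, and `|D_n - n!/e| < 1/4` for `n ≥ 3`.
-/

open Equiv

section AscDesc

variable {n : ℕ} (π : Perm (Fin n))

lemma not_desc_of_asc {i : ℕ} (h : Asc π i) : ¬ Desc π i := by
  rintro ⟨_, hd⟩
  obtain ⟨_, ha⟩ := h
  exact lt_asymm ha hd

lemma not_asc_iff_desc {i : ℕ} (h : i + 1 < n) : ¬ Asc π i ↔ Desc π i := by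
  refine ⟨fun ha => ⟨h, ?_⟩, fun hd ha => not_desc_of_asc π ha hd⟩
  refine lt_of_le_of_ne (not_lt.1 fun hlt => ha ⟨h, hlt⟩) fun heq => ?_
  simpa using π.injective heq

end AscDesc

/-- In one-line notation: `k` followed by the word of `σ` with every value `≥ k` raised by one. -/
def prependPerm {n : ℕ} (k : Fin (n + 1)) (σ : Perm (Fin n)) : Perm (Fin (n + 1)) :=
  (finSuccEquiv n).trans ((optionCongr σ).trans (finSuccEquiv' k).symm)

section PrependPerm

variable {n : ℕ} (k : Fin (n + 1)) (σ : Perm (Fin n))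

@[simp] lemma prependPerm_zero : prependPerm k σ 0 = k := by
  simp [prependPerm]

@[simp] lemma prependPerm_succ (i : Fin n) : prependPerm k σ i.succ = k.succAbove (σ i) := by
  simp [prependPerm]

lemma prependPerm_mk_succ (i : ℕ) (h : i + 1 < n + 1) :
    prependPerm k σ ⟨i + 1, h⟩ = k.succAbove (σ ⟨i, by omega⟩) :=
  prependPerm_succ k σ ⟨i, _⟩

lemma prependPerm_injective :
    Function.Injective (fun p : Fin (n + 1) × Perm (Fin n) => prependPerm p.1 p.2) := by
  rintro ⟨k, σ⟩ ⟨k', σ'⟩ h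
  obtain rfl : k = k' := by simpa using congr($h 0)
  obtain rfl : σ = σ' := Equiv.ext fun i => by simpa using congr($h i.succ)
  rfl

lemma sum_perm_succ {M : Type*} [AddCommMonoid M] (f : Perm (Fin (n + 1)) → M) :
    ∑ π, f π = ∑ k, ∑ σ : Perm (Fin n), f (prependPerm k σ) := by
  rw [← Fintype.sum_prod_type']
  refine (Fintype.sum_bijective (fun p : Fin (n + 1) × Perm (Fin n) => prependPerm p.1 p.2) ?_
    _ _ fun _ => rfl).symm
  rw [Fintype.bijective_iff_injective_and_card]
  exact ⟨prependPerm_injective, by simp [Fintype.card_perm, Nat.factorial_succ]⟩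

lemma sum_filter_val_apply_zero_eq {M : Type*} [AddCommMonoid M] (f : Perm (Fin (n + 1)) → M) :
    ∑ π ∈ univ.filter (fun π => (π 0 : ℕ) = k), f π = ∑ σ : Perm (Fin n), f (prependPerm k σ) := by
  simp_rw [Fin.val_inj]
  rw [sum_filter, sum_perm_succ, sum_comm]
  simp

lemma asc_prependPerm_succ (i : ℕ) : Asc (prependPerm k σ) (i + 1) ↔ Asc σ i := by
  simp only [Asc, prependPerm_mk_succ, Fin.succAbove_lt_succAbove_iff]
  exact ⟨fun ⟨h, hlt⟩ => ⟨by omega, hlt⟩, fun ⟨h, hlt⟩ => ⟨by omega, hlt⟩⟩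

lemma desc_prependPerm_succ (i : ℕ) : Desc (prependPerm k σ) (i + 1) ↔ Desc σ i := by
  simp only [Desc, prependPerm_mk_succ, Fin.succAbove_lt_succAbove_iff]
  exact ⟨fun ⟨h, hlt⟩ => ⟨by omega, hlt⟩, fun ⟨h, hlt⟩ => ⟨by omega, hlt⟩⟩

lemma dd_prependPerm :
    dd (prependPerm k σ) = dd σ + if Desc (prependPerm k σ) 0 ∧ Desc σ 0 then 1 else 0 := by
  simp only [dd, card_filter, sum_range_succ' _ n, desc_prependPerm_succ]

lemma noDoubleAsc_prependPerm :
    NoDoubleAsc (prependPerm k σ) ↔ ¬ (Asc (prependPerm k σ) 0 ∧ Asc σ 0) ∧ NoDoubleAsc σ := by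
  rw [NoDoubleAsc, ← Nat.and_forall_add_one]
  simp only [asc_prependPerm_succ]
  rfl

end PrependPerm

section PrependPermFirstStep

variable {n : ℕ} (k : Fin (n + 2)) (σ : Perm (Fin (n + 1)))

lemma asc_prependPerm_zero : Asc (prependPerm k σ) 0 ↔ (k : ℕ) ≤ σ 0 := by
  simp only [Asc, prependPerm_mk_succ, Fin.zero_eta, prependPerm_zero,
    Fin.lt_succAbove_iff_le_castSucc, Fin.le_def, Fin.val_castSucc]
  exact ⟨fun ⟨_, h⟩ => h, fun h => ⟨by omega, h⟩⟩

lemma desc_prependPerm_zero : Desc (prependPerm k σ) 0 ↔ (σ 0 : ℕ) < k := by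
  simp only [Desc, prependPerm_mk_succ, Fin.zero_eta, prependPerm_zero,
    Fin.succAbove_lt_iff_castSucc_lt]
  simp only [Fin.lt_def, Fin.val_castSucc]
  exact ⟨fun ⟨_, h⟩ => h, fun h => ⟨by omega, h⟩⟩

end PrependPermFirstStep

noncomputable def ascWeight {n : ℕ} (π : Perm (Fin (n + 2))) : ℕ :=
  if NoDoubleAsc π ∧ Asc π 0 ∧ Desc π n then 2 ^ dd π else 0

noncomputable def descWeight {n : ℕ} (π : Perm (Fin (n + 2))) : ℕ :=
  if NoDoubleAsc π ∧ Desc π 0 ∧ Desc π n then 2 ^ dd π else 0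

section WeightPrependPerm

variable {n : ℕ} (k : Fin (n + 3)) (σ : Perm (Fin (n + 2)))

lemma ascWeight_prependPerm :
    ascWeight (prependPerm k σ) = if (k : ℕ) ≤ σ 0 then descWeight σ else 0 := by
  have h01 : 0 + 1 < n + 2 := by omega
  by_cases hk : (k : ℕ) ≤ σ 0
  · have ha := (asc_prependPerm_zero k σ).2 hk
    simp only [ascWeight, descWeight, hk, ha, not_desc_of_asc _ ha, noDoubleAsc_prependPerm,
      dd_prependPerm, desc_prependPerm_succ, not_asc_iff_desc σ h01, true_and, false_and,
      ↓reduceIte, add_zero]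
    exact if_congr (by tauto) rfl rfl
  · simp [ascWeight, hk, asc_prependPerm_zero]

lemma descWeight_prependPerm :
    descWeight (prependPerm k σ) =
      if (σ 0 : ℕ) < k then 2 * descWeight σ + ascWeight σ else 0 := by
  have h01 : 0 + 1 < n + 2 := by omega
  by_cases hk : (σ 0 : ℕ) < k
  · have hd := (desc_prependPerm_zero k σ).2 hk
    have ha : ¬ Asc (prependPerm k σ) 0 := fun ha => not_desc_of_asc _ ha hd
    by_cases hσ : Desc σ 0
    · simp [ascWeight, descWeight, hk, hd, ha, hσ, (not_asc_iff_desc σ h01).2 hσ,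
        noDoubleAsc_prependPerm, dd_prependPerm, desc_prependPerm_succ, pow_succ']
    · simp [ascWeight, descWeight, hk, hd, ha, hσ, not_not.1 (mt (not_asc_iff_desc σ h01).1 hσ),
        noDoubleAsc_prependPerm, dd_prependPerm, desc_prependPerm_succ]
  · simp [descWeight, hk, desc_prependPerm_zero]

end WeightPrependPerm

noncomputable def ascWeightFrom (m k : ℕ) : ℕ :=
  ∑ π ∈ univ.filter (fun π : Perm (Fin (m + 2)) => (π 0 : ℕ) = k), ascWeight π

noncomputable def descWeightFrom (m k : ℕ) : ℕ :=
  ∑ π ∈ univ.filter (fun π : Perm (Fin (m + 2)) => (π 0 : ℕ) = k), descWeight π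

lemma ascWeightFrom_succ (m k : ℕ) (hk : k < m + 3) :
    ascWeightFrom (m + 1) k = ∑ j ∈ Ico k (m + 2), descWeightFrom m j := by
  have hmem (σ : Perm (Fin (m + 2))) : (σ 0 : ℕ) ∈ Ico k (m + 2) ↔ k ≤ σ 0 := by
    simp [(σ 0).isLt]
  rw [ascWeightFrom, sum_filter_val_apply_zero_eq ⟨k, hk⟩]
  simp only [ascWeight_prependPerm, ← hmem, descWeightFrom]
  rw [sum_fiberwise_eq_sum_filter, sum_filter]

lemma descWeightFrom_succ (m k : ℕ) (hk : k < m + 3) :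
    descWeightFrom (m + 1) k = ∑ j ∈ range k, (2 * descWeightFrom m j + ascWeightFrom m j) := by
  rw [descWeightFrom, sum_filter_val_apply_zero_eq ⟨k, hk⟩]
  simp only [descWeight_prependPerm, ← mem_range, descWeightFrom, ascWeightFrom, mul_sum,
    ← sum_add_distrib]
  rw [sum_fiberwise_eq_sum_filter, sum_filter]

lemma noDoubleAsc_of_fin_two (π : Perm (Fin 2)) : NoDoubleAsc π :=
  fun _ ⟨_, ⟨h, _⟩⟩ => by omega

lemma dd_of_fin_two (π : Perm (Fin 2)) : dd π = 0 :=
  card_eq_zero.2 <| filter_eq_empty_iff.2 fun _ _ ⟨_, ⟨h, _⟩⟩ => by omega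

lemma ascWeightFrom_zero (k : ℕ) : ascWeightFrom 0 k = 0 :=
  sum_eq_zero fun π _ => if_neg fun ⟨_, ha, hd⟩ => not_desc_of_asc π ha hd

lemma descWeightFrom_zero (k : Fin 2) : descWeightFrom 0 k = k := by
  rw [descWeightFrom, sum_filter_val_apply_zero_eq, Fintype.sum_unique, descWeight,
    dd_of_fin_two, if_congr (and_iff_right (noDoubleAsc_of_fin_two _)) rfl rfl]
  fin_cases k <;> simp [desc_prependPerm_zero]

lemma card_filter_fixedPoints_eq {α : Type*} [Fintype α] [DecidableEq α] (s : Finset α) :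
    #{π : Perm α | univ.filter (fun x => π x = x) = s} =
      numDerangements (Fintype.card α - #s) := by
  have e : {π : Perm α // univ.filter (fun x => π x = x) = s} ≃ derangements {a // a ∉ s} :=
    (Equiv.subtypeEquivRight fun π => by
      simp [Finset.ext_iff, Function.IsFixedPt, eq_comm]).trans
      (derangements.subtypeEquiv (· ∉ s)).symm
  rw [← Fintype.card_subtype, Fintype.card_congr e, card_derangements_eq_numDerangements,
    Fintype.card_subtype_compl, Fintype.card_coe]

lemma sum_choose_mul_numDerangements (n : ℕ) :
    ∑ i ∈ range (n + 1), n.choose i * numDerangements (n - i) = n.factorial := by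
  calc ∑ i ∈ range (n + 1), n.choose i * numDerangements (n - i)
      = ∑ s ∈ (univ : Finset (Fin n)).powerset, numDerangements (n - #s) := by
        rw [sum_powerset_apply_card (fun j => numDerangements (n - j))]
        simp
    _ = #(univ : Finset (Perm (Fin n))) := by
        rw [card_eq_sum_card_fiberwise (f := fun π => univ.filter fun x => π x = x)
          fun π _ => mem_powerset.2 (filter_subset _ univ)]
        simp [card_filter_fixedPoints_eq]
    _ = n.factorial := by simp [Fintype.card_perm]

/-- For `j ≤ m`, the number of permutations of `Fin m` whose fixed points all lie in a given
`j`-element set. -/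
def binomDerangements (m j : ℕ) : ℕ :=
  ∑ i ∈ range (j + 1), j.choose i * numDerangements (m - i)

lemma binomDerangements_zero_right (m : ℕ) : binomDerangements m 0 = numDerangements m := by
  simp [binomDerangements]

lemma binomDerangements_self (m : ℕ) : binomDerangements m m = m.factorial :=
  sum_choose_mul_numDerangements m

lemma binomDerangements_succ_succ (m j : ℕ) :
    binomDerangements (m + 1) (j + 1) = binomDerangements (m + 1) j + binomDerangements m j := by
  have hshift (j : ℕ) : binomDerangements (m + 1) j =
      ∑ i ∈ range (j + 1), j.choose (i + 1) * numDerangements (m - i) + numDerangements (m + 1) := by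
    rw [binomDerangements, sum_range_succ', sum_range_succ _ j, Nat.choose_succ_self]
    simp
  rw [hshift, hshift, binomDerangements, sum_range_succ _ (j + 1), Nat.choose_succ_self]
  simp only [Nat.choose_succ_succ, add_mul, sum_add_distrib]
  ring

lemma sum_range_binomDerangements (m k : ℕ) :
    ∑ j ∈ range k, binomDerangements (m + 1) j + numDerangements (m + 2) =
      binomDerangements (m + 2) k := by
  induction k with
  | zero => simp [binomDerangements_zero_right]
  | succ k ih => rw [sum_range_succ, add_right_comm, ih, binomDerangements_succ_succ]

lemma sum_range_mul_binomDerangements_add (m k : ℕ) :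
    ∑ j ∈ range k, (j * binomDerangements m (j - 1) + binomDerangements (m + 1) j) =
      k * binomDerangements (m + 1) (k - 1) := by
  induction k with
  | zero => simp
  | succ k ih =>
    rw [sum_range_succ, ih]
    rcases k with _ | k
    · simp
    · simp only [Nat.add_sub_cancel, binomDerangements_succ_succ]
      ring

lemma sum_range_mul_binomDerangements (m : ℕ) :
    ∑ j ∈ range (m + 2), j * binomDerangements m (j - 1) = numDerangements (m + 2) := by
  have h := sum_range_mul_binomDerangements_add m (m + 2)
  have h' := sum_range_binomDerangements m (m + 2)
  rw [sum_add_distrib, show m + 2 - 1 = m + 1 from rfl, binomDerangements_self] at h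
  rw [binomDerangements_self, Nat.factorial_succ] at h'
  linarith

lemma weightFrom_eq_binomDerangements (m k : ℕ) (hk : k < m + 2) :
    descWeightFrom m k = k * binomDerangements m (k - 1) ∧
      descWeightFrom m k + ascWeightFrom m k = binomDerangements (m + 1) k := by
  induction m generalizing k with
  | zero =>
    have hF := descWeightFrom_zero ⟨k, hk⟩
    interval_cases k <;>
      simp_all [ascWeightFrom_zero, binomDerangements_zero_right, binomDerangements_self]
  | succ m ih =>
    have hrange (k : ℕ) (hk : k ≤ m + 2) :
        ∑ j ∈ range k, (2 * descWeightFrom m j + ascWeightFrom m j) =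
          ∑ j ∈ range k, (j * binomDerangements m (j - 1) + binomDerangements (m + 1) j) := by
      refine sum_congr rfl fun j hj => ?_
      obtain ⟨hF, hH⟩ := ih j (by simp at hj; omega)
      rw [← hF, ← hH]
      ring
    have hF : descWeightFrom (m + 1) k = k * binomDerangements (m + 1) (k - 1) := by
      rw [descWeightFrom_succ m k hk, hrange k (by omega), sum_range_mul_binomDerangements_add]
    have hIco : ∑ j ∈ Ico k (m + 2), descWeightFrom m j =
        ∑ j ∈ Ico k (m + 2), j * binomDerangements m (j - 1) :=
      sum_congr rfl fun j hj => (ih j (mem_Ico.1 hj).2).1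
    refine ⟨hF, ?_⟩
    rw [ascWeightFrom_succ m k hk, hIco, descWeightFrom_succ m k hk, hrange k (by omega),
      sum_add_distrib, ← sum_range_binomDerangements, ← sum_range_mul_binomDerangements,
      ← sum_range_add_sum_Ico _ (by omega : k ≤ m + 2)]
    ring

lemma alphaAB_eq_sum_ascWeightFrom (m : ℕ) :
    alphaAB (m + 2) = ∑ k ∈ range (m + 2), ascWeightFrom m k := by
  rw [alphaAB, Nat.add_sub_cancel, sum_filter]
  exact (sum_fiberwise_of_maps_to (fun π _ => mem_range.2 (π 0).isLt) _).symm

lemma alphaAB_add_two_mul_numDerangements (m : ℕ) :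
    alphaAB (m + 2) + 2 * numDerangements (m + 2) = (m + 2).factorial := by
  have hdesc : ∑ k ∈ range (m + 2), descWeightFrom m k = numDerangements (m + 2) := by
    rw [← sum_range_mul_binomDerangements]
    exact sum_congr rfl fun k hk => (weightFrom_eq_binomDerangements m k (mem_range.1 hk)).1
  have htotal : ∑ k ∈ range (m + 2), (descWeightFrom m k + ascWeightFrom m k) +
      numDerangements (m + 2) = (m + 2).factorial := by
    rw [← binomDerangements_self, ← sum_range_binomDerangements]
    congr 1
    exact sum_congr rfl fun k hk => (weightFrom_eq_binomDerangements m k (mem_range.1 hk)).2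
  rw [sum_add_distrib, hdesc, ← alphaAB_eq_sum_ascWeightFrom] at htotal
  omega

lemma numDerangements_div_factorial (n : ℕ) :
    (numDerangements n : ℝ) / n.factorial = ∑ k ∈ range (n + 1), (-1 : ℝ) ^ k / k.factorial := by
  rw [← Int.cast_natCast, numDerangements_sum]
  push_cast
  rw [sum_div]
  refine sum_congr rfl fun k hk => ?_
  have hkn : k ≤ n := mem_range_succ_iff.mp hk
  rw [Nat.ascFactorial_eq_div, add_tsub_cancel_of_le hkn]
  push_cast [Nat.factorial_dvd_factorial hkn]
  field

lemma abs_numDerangements_sub_le (n : ℕ) :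
    |(numDerangements n : ℝ) - n.factorial * Real.exp (-1)| ≤ (n + 2) / (n + 1) ^ 2 := by
  have hfac : (0 : ℝ) < n.factorial := by positivity
  have hbound := Real.exp_bound (x := -1) (by norm_num) (n := n + 1) (by omega)
  rw [← numDerangements_div_factorial, abs_neg, abs_one, one_pow, one_mul, abs_sub_comm] at hbound
  calc |(numDerangements n : ℝ) - n.factorial * Real.exp (-1)|
      = n.factorial * |numDerangements n / n.factorial - Real.exp (-1)| := by
        rw [← abs_of_pos hfac, ← abs_mul, abs_of_pos hfac, mul_sub, mul_div_cancel₀ _ hfac.ne']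
    _ ≤ n.factorial * ((n + 1).succ / ((n + 1).factorial * (n + 1 : ℕ))) := by gcongr
    _ = (n + 2) / (n + 1) ^ 2 := by
        rw [Nat.factorial_succ]
        push_cast
        field_simp
        ring

lemma abs_numDerangements_sub_lt (n : ℕ) (hn : 3 ≤ n) :
    |(numDerangements n : ℝ) - n.factorial * Real.exp (-1)| < 1 / 4 := by
  obtain rfl | hn := hn.eq_or_lt
  · have hD : numDerangements 3 = 2 := by decide
    rw [hD, abs_lt]
    norm_num [Nat.factorial]
    constructor <;> linarith [Real.exp_neg_one_lt_d9, Real.exp_neg_one_gt_d9]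
  · refine (abs_numDerangements_sub_le n).trans_lt ?_
    rw [div_lt_div_iff₀ (by positivity) (by norm_num)]
    have h4 : (4 : ℝ) ≤ n := by exact_mod_cast hn
    nlinarith

/-- For n ≥ 3, α_n(a,b) is the nearest integer to (1 − 2/e) · n!. -/
theorem alphaAB_eq_nearest (n : ℕ) (hn : 3 ≤ n) :
    (alphaAB n : ℤ) = round ((1 - 2 / Real.exp 1) * n.factorial) := by
  obtain ⟨m, rfl⟩ : ∃ m, n = m + 2 := ⟨n - 2, by omega⟩
  have hα : (alphaAB (m + 2) : ℝ) = (m + 2).factorial - 2 * numDerangements (m + 2) := by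
    rw [← alphaAB_add_two_mul_numDerangements]
    push_cast
    ring
  have hD := abs_lt.1 (abs_numDerangements_sub_lt (m + 2) hn)
  have he : 2 / Real.exp 1 = 2 * Real.exp (-1) := by rw [Real.exp_neg, div_eq_mul_inv]
  rw [eq_comm, round_eq_iff, Set.mem_Ico, he, Int.cast_natCast, hα]
  constructor <;> linarith [hD.1, hD.2]
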